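/- arXiv:1907.03001 — 6 statements merged into one kernel-verified Lean document; each statement's English description precedes it below -/
import Mathlib

section
/- Under the hypotheses of the previous iteration scheme (Φ monotone with the integral bound Φ(m₂)(t) − Φ(m₁)(t) ≤ C∫₀^t(m₂−m₁)(s)ds for m₁ ≤ m₂, m_0^+ ≡ π̄, m_0^- ≡ 0, m_{k+1}^± = Φ(m_k^±), and additionally Φ(m_0^+) ≤ m_0^+ and Φ(m_0^-) ≥ m_0^-), the sequences satisfy m_k^-(t) ≤ m_{k+1}^-(t) ≤ m_{k+1}^+(t) ≤ m_k^+(t) for all k and t, both converge pointwise to a common limit m^∞, and m^∞ is the unique fixed point of Φ among measurable functions ℝ₊ → [0,π̄]. -/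
open MeasureTheory Set Filter

theorem stmt_2 (pibar C : ℝ) (hpi : 0 < pibar) (hC : 0 < C)
    (Φ : (ℝ → ℝ) → (ℝ → ℝ))
    (hrange : ∀ m : ℝ → ℝ, Measurable m → (∀ s, m s ∈ Icc 0 pibar) →
      Measurable (Φ m) ∧ ∀ t, Φ m t ∈ Icc 0 pibar)
    (hmono : ∀ m₁ m₂ : ℝ → ℝ, Measurable m₁ → Measurable m₂ →
      (∀ s, m₁ s ∈ Icc 0 pibar) → (∀ s, m₂ s ∈ Icc 0 pibar) →
      (∀ᵐ s ∂(volume.restrict (Ici (0:ℝ))), m₁ s ≤ m₂ s) →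
      ∀ t, Φ m₁ t ≤ Φ m₂ t)
    (hbound : ∀ m₁ m₂ : ℝ → ℝ, Measurable m₁ → Measurable m₂ →
      (∀ s, m₁ s ∈ Icc 0 pibar) → (∀ s, m₂ s ∈ Icc 0 pibar) →
      (∀ᵐ s ∂(volume.restrict (Ici (0:ℝ))), m₁ s ≤ m₂ s) →
      ∀ t, 0 ≤ t → Φ m₂ t - Φ m₁ t ≤ C * ∫ s in (0:ℝ)..t, (m₂ s - m₁ s))
    (mp mm : ℕ → ℝ → ℝ)
    (hmp0 : mp 0 = fun _ => pibar) (hmm0 : mm 0 = fun _ => 0)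
    (hmpS : ∀ k, mp (k + 1) = Φ (mp k)) (hmmS : ∀ k, mm (k + 1) = Φ (mm k))
    (hsub : ∀ t, Φ (mp 0) t ≤ mp 0 t) (hsup : ∀ t, mm 0 t ≤ Φ (mm 0) t) :
    (∀ k : ℕ, ∀ t : ℝ, 0 ≤ t →
      mm k t ≤ mm (k + 1) t ∧ mm (k + 1) t ≤ mp (k + 1) t ∧ mp (k + 1) t ≤ mp k t) ∧
    ∃ minf : ℝ → ℝ, Measurable minf ∧ (∀ s, minf s ∈ Icc 0 pibar) ∧
      (∀ t : ℝ, 0 ≤ t → Tendsto (fun k => mp k t) atTop (nhds (minf t))) ∧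
      (∀ t : ℝ, 0 ≤ t → Tendsto (fun k => mm k t) atTop (nhds (minf t))) ∧
      (∀ t : ℝ, 0 ≤ t → Φ minf t = minf t) ∧
      (∀ m : ℝ → ℝ, Measurable m → (∀ s, m s ∈ Icc 0 pibar) →
        (∀ t : ℝ, 0 ≤ t → Φ m t = m t) → ∀ t : ℝ, 0 ≤ t → m t = minf t) := by
  have hpi0 : (0:ℝ) ≤ pibar := hpi.le
  have hmp_meas : ∀ k, Measurable (mp k) ∧ ∀ s, mp k s ∈ Icc 0 pibar := by
    intro k; induction k with
    | zero => rw [hmp0]; exact ⟨measurable_const, fun s => ⟨hpi0, le_refl _⟩⟩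
    | succ k ih => rw [hmpS]; exact hrange _ ih.1 ih.2
  have hmm_meas : ∀ k, Measurable (mm k) ∧ ∀ s, mm k s ∈ Icc 0 pibar := by
    intro k; induction k with
    | zero => rw [hmm0]; exact ⟨measurable_const, fun s => ⟨le_refl _, hpi0⟩⟩
    | succ k ih => rw [hmmS]; exact hrange _ ih.1 ih.2
  -- pointwise chain (for all real t)
  have hchain : ∀ k, ∀ t, mm k t ≤ mm (k+1) t ∧ mp (k+1) t ≤ mp k t ∧ mm k t ≤ mp k t := by
    intro k; induction k with
    | zero =>
      intro t
      refine ⟨?_, ?_, ?_⟩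
      · rw [hmmS]; exact hsup t
      · rw [hmpS]; exact hsub t
      · rw [hmm0, hmp0]; exact hpi0
    | succ k ih =>
      intro t
      refine ⟨?_, ?_, ?_⟩
      · calc mm (k+1) t = Φ (mm k) t := congrFun (hmmS k) t
          _ ≤ Φ (mm (k+1)) t := hmono _ _ (hmm_meas k).1 (hmm_meas (k+1)).1 (hmm_meas k).2
              (hmm_meas (k+1)).2 (ae_of_all _ fun s => (ih s).1) t
          _ = mm (k+2) t := (congrFun (hmmS (k+1)) t).symm
      · calc mp (k+2) t = Φ (mp (k+1)) t := congrFun (hmpS (k+1)) t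
          _ ≤ Φ (mp k) t := hmono _ _ (hmp_meas (k+1)).1 (hmp_meas k).1 (hmp_meas (k+1)).2
              (hmp_meas k).2 (ae_of_all _ fun s => (ih s).2.1) t
          _ = mp (k+1) t := (congrFun (hmpS k) t).symm
      · calc mm (k+1) t = Φ (mm k) t := congrFun (hmmS k) t
          _ ≤ Φ (mp k) t := hmono _ _ (hmm_meas k).1 (hmp_meas k).1 (hmm_meas k).2
              (hmp_meas k).2 (ae_of_all _ fun s => (ih s).2.2) t
          _ = mp (k+1) t := (congrFun (hmpS k) t).symm
  have hmm_mono : ∀ t, Monotone fun k => mm k t :=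
    fun t => monotone_nat_of_le_succ fun k => (hchain k t).1
  have hmp_anti : ∀ t, Antitone fun k => mp k t :=
    fun t => antitone_nat_of_succ_le fun k => (hchain k t).2.1
  have hcross : ∀ j k t, mm j t ≤ mp k t := by
    intro j k t
    rcases le_total j k with h | h
    · exact (hmm_mono t h).trans (hchain k t).2.2
    · exact ((hchain j t).2.2).trans (hmp_anti t h)
  set minf : ℝ → ℝ := fun t => ⨅ k, mp k t with hminf_def
  have hbdd : ∀ t, BddBelow (range fun k => mp k t) := by
    intro t
    refine ⟨0, ?_⟩
    rintro x ⟨k, rfl⟩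
    exact ((hmp_meas k).2 t).1
  have hminf_le : ∀ k t, minf t ≤ mp k t := fun k t => ciInf_le (hbdd t) k
  have hle_minf : ∀ k t, mm k t ≤ minf t := fun k t => le_ciInf fun j => hcross k j t
  have hmp_tend : ∀ t, Tendsto (fun k => mp k t) atTop (nhds (minf t)) :=
    fun t => tendsto_atTop_ciInf (hmp_anti t) (hbdd t)
  have hminf_meas : Measurable minf := Measurable.iInf fun k => (hmp_meas k).1
  have hminf_range : ∀ s, minf s ∈ Icc 0 pibar := by
    intro s
    constructor
    · exact le_ciInf fun k => ((hmp_meas k).2 s).1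
    · calc minf s ≤ mp 0 s := hminf_le 0 s
        _ = pibar := by rw [hmp0]
  -- interval integrability of differences
  have hII : ∀ k (t : ℝ), 0 ≤ t →
      IntervalIntegrable (fun s => mp k s - mm k s) volume 0 t := by
    intro k t ht
    have hmeas : Measurable fun s => mp k s - mm k s := (hmp_meas k).1.sub (hmm_meas k).1
    rw [intervalIntegrable_iff_integrableOn_Ioc_of_le ht]
    refine Integrable.mono' (integrable_const pibar) hmeas.aestronglyMeasurable ?_
    refine ae_of_all _ fun s => ?_
    rw [Real.norm_eq_abs, abs_le]
    constructor
    · have h1 := ((hmp_meas k).2 s).1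
      have h2 := ((hmm_meas k).2 s).2
      linarith
    · have h1 := ((hmp_meas k).2 s).2
      have h2 := ((hmm_meas k).2 s).1
      linarith
  -- Gronwall-type estimate
  have hd : ∀ k (t : ℝ), 0 ≤ t →
      mp k t - mm k t ≤ pibar * C ^ k * t ^ k / (Nat.factorial k) := by
    intro k; induction k with
    | zero =>
      intro t _
      rw [hmp0, hmm0]
      simp
    | succ k ih =>
      intro t ht
      have hstep : mp (k+1) t - mm (k+1) t ≤ C * ∫ s in (0:ℝ)..t, (mp k s - mm k s) := by
        rw [hmpS, hmmS]
        exact hbound _ _ (hmm_meas k).1 (hmp_meas k).1 (hmm_meas k).2 (hmp_meas k).2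
          (ae_of_all _ fun s => (hchain k s).2.2) t ht
      have hIpoly : IntervalIntegrable (fun s : ℝ => pibar * C ^ k / (Nat.factorial k) * s ^ k)
          volume 0 t :=
        ((continuous_const.mul (continuous_pow k)).intervalIntegrable 0 t)
      have hintle : (∫ s in (0:ℝ)..t, (mp k s - mm k s)) ≤
          ∫ s in (0:ℝ)..t, pibar * C ^ k / (Nat.factorial k) * s ^ k := by
        refine intervalIntegral.integral_mono_on ht (hII k t ht) hIpoly ?_
        intro s hs
        have := ih s hs.1
        calc mp k s - mm k s ≤ pibar * C ^ k * s ^ k / (Nat.factorial k) := this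
          _ = pibar * C ^ k / (Nat.factorial k) * s ^ k := by ring
      have hval : (∫ s in (0:ℝ)..t, pibar * C ^ k / (Nat.factorial k) * s ^ k)
          = pibar * C ^ k / (Nat.factorial k) * (t ^ (k+1) / (k+1)) := by
        rw [intervalIntegral.integral_const_mul, integral_pow]
        ring
      have hfac : ((Nat.factorial (k+1) : ℝ)) = (k+1) * (Nat.factorial k) := by
        rw [Nat.factorial_succ]; push_cast; ring
      have hfk : (0:ℝ) < Nat.factorial k := by positivity
      calc mp (k+1) t - mm (k+1) t
          ≤ C * ∫ s in (0:ℝ)..t, (mp k s - mm k s) := hstep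
        _ ≤ C * (pibar * C ^ k / (Nat.factorial k) * (t ^ (k+1) / (k+1))) := by
            rw [← hval]; exact mul_le_mul_of_nonneg_left hintle hC.le
        _ = pibar * C ^ (k+1) * t ^ (k+1) / (Nat.factorial (k+1)) := by
            rw [hfac]
            field_simp
            ring
  have hbound0 : ∀ t : ℝ, 0 ≤ t →
      Tendsto (fun k => pibar * C ^ k * t ^ k / (Nat.factorial k)) atTop (nhds 0) := by
    intro t _
    have h1 := (FloorSemiring.tendsto_pow_div_factorial_atTop (C * t)).const_mul pibar
    rw [mul_zero] at h1
    refine h1.congr fun k => ?_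
    rw [mul_pow]
    ring
  have hmm_tend : ∀ t : ℝ, 0 ≤ t → Tendsto (fun k => mm k t) atTop (nhds (minf t)) := by
    intro t ht
    have hd0 : Tendsto (fun k => mp k t - mm k t) atTop (nhds 0) :=
      squeeze_zero (fun k => sub_nonneg.2 (hcross k k t)) (fun k => hd k t ht) (hbound0 t ht)
    have := (hmp_tend t).sub hd0
    simpa using this
  have hfix : ∀ t : ℝ, 0 ≤ t → Φ minf t = minf t := by
    intro t ht
    have h1 : ∀ k, Φ minf t ≤ mp (k+1) t := by
      intro k
      rw [hmpS]
      exact hmono _ _ hminf_meas (hmp_meas k).1 hminf_range (hmp_meas k).2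
        (ae_of_all _ fun s => hminf_le k s) t
    have h2 : ∀ k, mm (k+1) t ≤ Φ minf t := by
      intro k
      rw [hmmS]
      exact hmono _ _ (hmm_meas k).1 hminf_meas (hmm_meas k).2 hminf_range
        (ae_of_all _ fun s => hle_minf k s) t
    have hp : Tendsto (fun k => mp (k+1) t) atTop (nhds (minf t)) :=
      (hmp_tend t).comp (tendsto_add_atTop_nat 1)
    have hm : Tendsto (fun k => mm (k+1) t) atTop (nhds (minf t)) :=
      (hmm_tend t ht).comp (tendsto_add_atTop_nat 1)
    have hle1 : Φ minf t ≤ minf t := ge_of_tendsto hp (Eventually.of_forall h1)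
    have hle2 : minf t ≤ Φ minf t := le_of_tendsto hm (Eventually.of_forall h2)
    exact le_antisymm hle1 hle2
  refine ⟨fun k t _ => ⟨(hchain k t).1, hcross (k+1) (k+1) t, (hchain k t).2.1⟩,
    minf, hminf_meas, hminf_range, fun t _ => hmp_tend t, hmm_tend, hfix, ?_⟩
  intro m hm hmrange hmfix t ht
  have hsq : ∀ k, ∀ t : ℝ, 0 ≤ t → mm k t ≤ m t ∧ m t ≤ mp k t := by
    intro k; induction k with
    | zero =>
      intro t _
      rw [hmm0, hmp0]
      exact ⟨(hmrange t).1, (hmrange t).2⟩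
    | succ k ih =>
      intro t ht
      constructor
      · rw [hmmS, ← hmfix t ht]
        exact hmono _ _ (hmm_meas k).1 hm (hmm_meas k).2 hmrange
          ((ae_restrict_iff' measurableSet_Ici).2 (ae_of_all _ fun s hs => (ih s hs).1)) t
      · rw [hmpS, ← hmfix t ht]
        exact hmono _ _ hm (hmp_meas k).1 hmrange (hmp_meas k).2
          ((ae_restrict_iff' measurableSet_Ici).2 (ae_of_all _ fun s hs => (ih s hs).2)) t
  have h1 : m t ≤ minf t := le_ciInf fun k => (hsq k t ht).2
  have h2 : minf t ≤ m t :=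
    le_of_tendsto (hmm_tend t ht) (Eventually.of_forall fun k => (hsq k t ht).1)
  exact le_antisymm h1 h2
end

section
/- With μ(ℓ) as in the previous recursion and normalized so that Σ_{ℓ=0}^n μ(ℓ) = 1, the derivative at m = 0 of the mean Σ_{ℓ=0}^n ℓ·μ(ℓ) (viewed as a function of m ∈ [0,π̄]) equals (λ_G n)/(γ π̄) · ( 1 + Σ_{ℓ=1}^{n−1} (λ_L/γ)^ℓ ∏_{j=1}^{ℓ} (1 − j/n) ). -/
/-!
The recursion gives `μ_m(ℓ) = μ_m(0) ∏_{j<ℓ} r_j(m)` with `r_j(m) = μ_m(j+1) / μ_m(j)`, so the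
normalisation makes the mean the ratio `(∑ ℓ c_m(ℓ)) / (∑ c_m(ℓ))` of sums of the weights
`c_m(ℓ) = ∏_{j<ℓ} r_j(m)`. Since `r_0(m)` is a multiple of `m`, every weight but `c_m(0) = 1`
carries a factor `m`, so the mean is `m Q(m) / (1 + m R(m))` with `Q`, `R` smooth, and its
derivative at `0` is `Q(0)`. At `m = 0` the factors `(j+1)/(j+2)` in `r_{j+1}(0)` telescope,
which produces the closed form.
-/

open Finset

theorem eq_prod_range_mul_of_succ_eq {M : Type*} [CommMonoid M] {x r : ℕ → M} {N : ℕ}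
    (h : ∀ ℓ < N, x (ℓ + 1) = r ℓ * x ℓ) : ∀ ℓ ≤ N, x ℓ = (∏ j ∈ range ℓ, r j) * x 0 := by
  intro ℓ hℓ
  induction ℓ with
  | zero => simp
  | succ k ih => rw [h k hℓ, ih (by omega), prod_range_succ, mul_assoc, mul_left_comm]

theorem sum_mul_eq_div_sum_of_eq_mul {ι K : Type*} [Field K] {s : Finset ι} {μ c w : ι → K}
    {t : K} (hμ : ∀ i ∈ s, μ i = c i * t) (hsum : ∑ i ∈ s, μ i = 1) :
    ∑ i ∈ s, w i * μ i = (∑ i ∈ s, w i * c i) / ∑ i ∈ s, c i := by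
  have hsum_mul (v : ι → K) : ∑ i ∈ s, v i * μ i = (∑ i ∈ s, v i * c i) * t := by
    rw [sum_mul]; exact sum_congr rfl fun i hi => by rw [hμ i hi, mul_assoc]
  have ht : t = (∑ i ∈ s, c i)⁻¹ :=
    eq_inv_of_mul_eq_one_right (by simpa [hsum] using (hsum_mul 1).symm)
  rw [hsum_mul, ht, div_eq_mul_inv]

theorem sum_range_succ_mul_prod_range {R : Type*} [CommSemiring R] (N : ℕ) (w r : ℕ → R) :
    ∑ ℓ ∈ range (N + 1), w ℓ * ∏ j ∈ range ℓ, r j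
      = w 0 + r 0 * ∑ k ∈ range N, w (k + 1) * ∏ j ∈ range k, r (j + 1) := by
  simp only [sum_range_succ', prod_range_succ', mul_sum, prod_range_zero, mul_one]
  rw [add_comm]; congr 1; exact sum_congr rfl fun k _ => by ring

theorem prod_range_succ_div_succ_succ {K : Type*} [Field K] [CharZero K] (k : ℕ) :
    ∏ j ∈ range k, ((j : K) + 1) / (j + 2) = 1 / (k + 1) := by
  induction k with
  | zero => simp
  | succ k ih =>
    rw [prod_range_succ, ih]; push_cast
    field_simp; ring

theorem hasDerivAt_mul_div_one_add_mul {𝕜 : Type*} [NontriviallyNormedField 𝕜] {Q R : 𝕜 → 𝕜}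
    (hQ : DifferentiableAt 𝕜 Q 0) (hR : DifferentiableAt 𝕜 R 0) :
    HasDerivAt (fun m => m * Q m / (1 + m * R m)) (Q 0) 0 := by
  simpa using ((hasDerivAt_id' 0).fun_mul hQ.hasDerivAt).fun_div
    (((hasDerivAt_id' 0).fun_mul hR.hasDerivAt).const_add 1) (by simp)

/-- `r_j(m)` of the recursion, where `a` stands for `λ_G n / π̄`. -/
noncomputable def stepRatio (n : ℕ) (lamL a gam : ℝ) (j : ℕ) (m : ℝ) : ℝ :=
  (1 - (j : ℝ) / n) * (lamL * j + a * m) / (gam * (j + 1))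

theorem stepRatio_zero (n : ℕ) (lamL a gam m : ℝ) :
    stepRatio n lamL a gam 0 m = m * (a / gam) := by
  simp only [stepRatio]; push_cast; ring

@[fun_prop]
theorem differentiable_stepRatio (n : ℕ) (lamL a gam : ℝ) (j : ℕ) :
    Differentiable ℝ (stepRatio n lamL a gam j) := by
  unfold stepRatio; fun_prop

theorem mul_prod_stepRatio_succ_zero (n : ℕ) (lamL a gam : ℝ) (k : ℕ) :
    ((k : ℝ) + 1) * ∏ j ∈ range k, stepRatio n lamL a gam (j + 1) 0
      = (lamL / gam) ^ k * ∏ j ∈ Icc 1 k, (1 - (j : ℝ) / n) := by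
  have hratio (j : ℕ) : stepRatio n lamL a gam (j + 1) 0
      = lamL / gam * (1 - ((j + 1 : ℕ) : ℝ) / n) * (((j : ℝ) + 1) / (j + 2)) := by
    simp only [stepRatio, div_eq_mul_inv, mul_inv]; push_cast; ring
  simp only [hratio, prod_mul_distrib, prod_const, card_range, prod_range_succ_div_succ_succ]
  rw [← Ico_add_one_right_eq_Icc, prod_Ico_eq_prod_range]
  field_simp
  simp [add_comm]

theorem hasDerivAt_mean_stepRatio (n : ℕ) (lamL a gam : ℝ) :
    HasDerivAt (fun m =>
        (∑ ℓ ∈ range (n + 1), (ℓ : ℝ) * ∏ j ∈ range ℓ, stepRatio n lamL a gam j m) /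
          ∑ ℓ ∈ range (n + 1), ∏ j ∈ range ℓ, stepRatio n lamL a gam j m)
      (a / gam * ∑ k ∈ range n, ((k : ℝ) + 1) * ∏ j ∈ range k, stepRatio n lamL a gam (j + 1) 0)
      0 := by
  set r := stepRatio n lamL a gam
  refine (hasDerivAt_mul_div_one_add_mul
    (Q := fun m => a / gam * ∑ k ∈ range n, ((k : ℝ) + 1) * ∏ j ∈ range k, r (j + 1) m)
    (R := fun m => a / gam * ∑ k ∈ range n, ∏ j ∈ range k, r (j + 1) m)
    (by fun_prop) (by fun_prop)).congr_of_eventuallyEq (.of_forall fun m => ?_)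
  have hsplit (w : ℕ → ℝ) := sum_range_succ_mul_prod_range n w (r · m)
  beta_reduce
  rw [← sum_congr rfl fun ℓ _ => one_mul (∏ j ∈ range ℓ, r j m), hsplit, hsplit]
  simp only [Nat.cast_zero, r, stepRatio_zero, Nat.cast_add, Nat.cast_one, zero_add, one_mul]
  ring

theorem stmt_4_general (n : ℕ) (hn : 1 ≤ n) (lamL lamG gam pibar : ℝ)
    (hg : 0 < gam) (hpi : 0 < pibar)
    (μ : ℝ → ℕ → ℝ)
    (hrec : ∀ m ∈ Set.Icc (0:ℝ) pibar, ∀ ℓ : ℕ, ℓ ≤ n - 1 →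
      gam * (ℓ + 1 : ℝ) * μ m (ℓ + 1) =
        (1 - (ℓ : ℝ) / n) * (lamL * ℓ + lamG * ((n : ℝ) / pibar) * m) * μ m ℓ)
    (hprob : ∀ m ∈ Set.Icc (0:ℝ) pibar, (∀ ℓ ≤ n, 0 ≤ μ m ℓ) ∧
      ∑ ℓ ∈ Finset.range (n + 1), μ m ℓ = 1) :
    HasDerivWithinAt (fun m => ∑ ℓ ∈ Finset.range (n + 1), (ℓ : ℝ) * μ m ℓ)
      ((lamG * n) / (gam * pibar) *
        (1 + ∑ ℓ ∈ Finset.Icc 1 (n - 1),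
          (lamL / gam) ^ ℓ * ∏ j ∈ Finset.Icc 1 ℓ, (1 - (j : ℝ) / n)))
      (Set.Icc 0 pibar) 0 := by
  set a := lamG * ((n : ℝ) / pibar)
  have hweights : ∀ m ∈ Set.Icc 0 pibar, ∀ ℓ ∈ range (n + 1),
      μ m ℓ = (∏ j ∈ range ℓ, stepRatio n lamL a gam j m) * μ m 0 := by
    intro m hm ℓ hℓ
    refine eq_prod_range_mul_of_succ_eq (fun k hk => ?_) ℓ (mem_range_succ_iff.mp hℓ)
    rw [stepRatio, div_mul_eq_mul_div, eq_div_iff (by positivity), ← hrec m hm k (by omega)]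
    ring
  have hmean : ∀ m ∈ Set.Icc 0 pibar, ∑ ℓ ∈ range (n + 1), (ℓ : ℝ) * μ m ℓ
      = (∑ ℓ ∈ range (n + 1), (ℓ : ℝ) * ∏ j ∈ range ℓ, stepRatio n lamL a gam j m) /
        ∑ ℓ ∈ range (n + 1), ∏ j ∈ range ℓ, stepRatio n lamL a gam j m :=
    fun m hm => sum_mul_eq_div_sum_of_eq_mul (hweights m hm) (hprob m hm).2
  refine ((hasDerivAt_mean_stepRatio n lamL a gam).hasDerivWithinAt.congr hmean
    (hmean 0 ⟨le_rfl, hpi.le⟩)).congr_deriv ?_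
  have hrange : range n = insert 0 (Icc 1 (n - 1)) := by
    ext k; simp only [mem_range, mem_insert, mem_Icc]; omega
  rw [hrange, sum_insert (by simp)]
  simp only [Nat.cast_zero, zero_add, range_zero, prod_empty, mul_one,
    mul_prod_stepRatio_succ_zero, a]
  ring

theorem stmt_4 (n : ℕ) (hn : 1 ≤ n) (lamL lamG gam pibar : ℝ)
    (hL : 0 < lamL) (hG : 0 < lamG) (hg : 0 < gam) (hpi : 0 < pibar)
    (μ : ℝ → ℕ → ℝ)
    (hrec : ∀ m ∈ Set.Icc (0:ℝ) pibar, ∀ ℓ : ℕ, ℓ ≤ n - 1 →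
      gam * (ℓ + 1 : ℝ) * μ m (ℓ + 1) =
        (1 - (ℓ : ℝ) / n) * (lamL * ℓ + lamG * ((n : ℝ) / pibar) * m) * μ m ℓ)
    (hprob : ∀ m ∈ Set.Icc (0:ℝ) pibar, (∀ ℓ ≤ n, 0 ≤ μ m ℓ) ∧
      ∑ ℓ ∈ Finset.range (n + 1), μ m ℓ = 1) :
    HasDerivWithinAt (fun m => ∑ ℓ ∈ Finset.range (n + 1), (ℓ : ℝ) * μ m ℓ)
      ((lamG * n) / (gam * pibar) *
        (1 + ∑ ℓ ∈ Finset.Icc 1 (n - 1),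
          (lamL / gam) ^ ℓ * ∏ j ∈ Finset.Icc 1 ℓ, (1 - (j : ℝ) / n)))
      (Set.Icc 0 pibar) 0 :=
  stmt_4_general n hn lamL lamG gam pibar hg hpi μ hrec hprob
end

section
/- Let f : [0,π̄] → [0,π̄] be continuous, non-decreasing, strictly concave with f(0) = 0 and right derivative at 0 strictly greater than 1, and let m⋆ ∈ (0,π̄] be its unique positive fixed point. Then for every x ∈ (0, π̄], the iterates f^{∘k}(x) converge to m⋆ as k → ∞; and if the right derivative at 0 is ≤ 1, then f^{∘k}(x) → 0 for every x ∈ [0,π̄]. -/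
open Set Filter

theorem stmt_6 (pibar : ℝ) (hpi : 0 < pibar) (f : ℝ → ℝ)
    (hcont : ContinuousOn f (Icc 0 pibar))
    (hmono : MonotoneOn f (Icc 0 pibar))
    (hconc : StrictConcaveOn ℝ (Icc 0 pibar) f)
    (hmaps : ∀ x ∈ Icc 0 pibar, f x ∈ Icc 0 pibar)
    (hf0 : f 0 = 0)
    (d : ℝ)
    (hd : Tendsto (fun h => (f h - f 0) / h) (nhdsWithin 0 (Ioi 0)) (nhds d)) :
    (1 < d → ∀ mstar ∈ Ioc 0 pibar, f mstar = mstar →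
      ∀ x ∈ Ioc 0 pibar, Tendsto (fun k => f^[k] x) atTop (nhds mstar)) ∧
    (d ≤ 1 → ∀ x ∈ Icc 0 pibar, Tendsto (fun k => f^[k] x) atTop (nhds 0)) := by
  -- ratio strict decrease: for 0 < x < y ≤ pibar, x * f y < y * f x
  have hratio : ∀ x y : ℝ, 0 < x → x < y → y ≤ pibar → x * f y < y * f x := by
    intro x y hx hxy hy
    have hy0 : 0 < y := hx.trans hxy
    have ha : 0 < 1 - x / y := by
      have : x / y < 1 := (div_lt_one hy0).mpr hxy
      linarith
    have hb : 0 < x / y := div_pos hx hy0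
    have key := hconc.2 (⟨le_refl _, hpi.le⟩ : (0:ℝ) ∈ Icc 0 pibar)
      (⟨hy0.le, hy⟩ : y ∈ Icc 0 pibar) hy0.ne ha hb (by ring)
    simp only [smul_eq_mul, hf0, mul_zero, zero_add] at key
    have hxy' : x / y * y = x := div_mul_cancel₀ x hy0.ne'
    rw [hxy'] at key
    -- key : (x/y) * f y < f x
    have := mul_lt_mul_of_pos_left key hy0
    calc x * f y = y * (x / y * f y) := by field_simp
    _ < y * f x := this
  have hdge : ∀ z : ℝ, 0 < z → z ≤ pibar → f z / z ≤ d := by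
    intro z hz hzp
    refine ge_of_tendsto hd ?_
    filter_upwards [Ioo_mem_nhdsGT_of_mem (⟨le_refl 0, hz⟩ : (0:ℝ) ∈ Ico 0 z)] with h hh
    have hr := hratio h z hh.1 hh.2 hzp
    rw [hf0, sub_zero, div_le_div_iff₀ hz hh.1]
    nlinarith
  have hstrict : ∀ z : ℝ, 0 < z → z ≤ pibar → f z < d * z := by
    intro z hz hzp
    have hw0 : 0 < z / 2 := half_pos hz
    have hwp : z / 2 ≤ pibar := (half_le_self hz.le).trans hzp
    have hr := hratio (z / 2) z hw0 (half_lt_self hz) hzp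
    have hw := hdge (z / 2) hw0 hwp
    rw [div_le_iff₀ hw0] at hw
    nlinarith
  have hfix : ∀ x L : ℝ, (∀ k, f^[k] x ∈ Icc 0 pibar) → L ∈ Icc 0 pibar →
      Tendsto (fun k => f^[k] x) atTop (nhds L) → f L = L := by
    intro x L hk hL hT
    have hT' : Tendsto (fun k => f^[k] x) atTop (nhdsWithin L (Icc 0 pibar)) :=
      tendsto_nhdsWithin_of_tendsto_nhds_of_eventually_within _ hT (Eventually.of_forall hk)
    have h2 : Tendsto (fun k => f (f^[k] x)) atTop (nhds (f L)) := (hcont L hL).tendsto.comp hT'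
    have h1 : Tendsto (fun k => f^[k+1] x) atTop (nhds L) := hT.comp (tendsto_add_atTop_nat 1)
    have heq : (fun k => f^[k+1] x) = fun k => f (f^[k] x) := by
      funext k; exact Function.iterate_succ_apply' f k x
    rw [heq] at h1
    exact tendsto_nhds_unique h2 h1
  constructor
  · intro hd1 mstar hms hfm x hx
    have hm0 : 0 < mstar := hms.1
    have hmpi : mstar ≤ pibar := hms.2
    have huniq : ∀ L : ℝ, 0 < L → L ≤ pibar → f L = L → L = mstar := by
      intro L hL0 hLp hfL
      rcases lt_trichotomy L mstar with h | h | h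
      · have := hratio L mstar hL0 h hmpi; rw [hfm, hfL] at this; nlinarith
      · exact h
      · have := hratio mstar L hm0 h hLp; rw [hfm, hfL] at this; nlinarith
    rcases le_or_gt x mstar with hcase | hcase
    · -- increasing case
      have hge : ∀ z, z ∈ Ioc 0 mstar → z ≤ f z := by
        intro z hz
        rcases eq_or_lt_of_le hz.2 with h | h
        · rw [h, hfm]
        · have := hratio z mstar hz.1 h hmpi
          rw [hfm] at this; nlinarith
      have hinv : ∀ z, z ∈ Ioc 0 mstar → f z ∈ Ioc 0 mstar := by
        intro z hz
        have hzpi : z ≤ pibar := hz.2.trans hmpi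
        have hle : f z ≤ mstar := by
          have := hmono ⟨hz.1.le, hzpi⟩ ⟨hm0.le, hmpi⟩ hz.2
          rwa [hfm] at this
        exact ⟨hz.1.trans_le (hge z hz), hle⟩
      have hmem : ∀ k, f^[k] x ∈ Ioc 0 mstar := by
        intro k
        induction k with
        | zero => simpa using ⟨hx.1, hcase⟩
        | succ n ih => rw [Function.iterate_succ_apply']; exact hinv _ ih
      have hmonoSeq : Monotone fun k => f^[k] x := by
        refine monotone_nat_of_le_succ fun k => ?_
        rw [Function.iterate_succ_apply']
        exact hge _ (hmem k)
      have hBdd : BddAbove (range fun k => f^[k] x) := by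
        refine ⟨mstar, ?_⟩; rintro _ ⟨k, rfl⟩; exact (hmem k).2
      have hT := tendsto_atTop_ciSup hmonoSeq hBdd
      set L := ⨆ k, f^[k] x with hLdef
      have hLx : x ≤ L := by
        have := le_ciSup hBdd 0
        simpa using this
      have hLm : L ≤ mstar := ciSup_le fun k => (hmem k).2
      have hL0 : 0 < L := hx.1.trans_le hLx
      have hfL := hfix x L (fun k => ⟨(hmem k).1.le, (hmem k).2.trans hmpi⟩)
        ⟨hL0.le, hLm.trans hmpi⟩ hT
      have : L = mstar := huniq L hL0 (hLm.trans hmpi) hfL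
      rwa [this] at hT
    · -- decreasing case
      have hle : ∀ z, z ∈ Icc mstar pibar → f z ≤ z := by
        intro z hz
        rcases eq_or_lt_of_le hz.1 with h | h
        · rw [← h, hfm]
        · have := hratio mstar z hm0 h hz.2
          rw [hfm] at this; nlinarith
      have hinv : ∀ z, z ∈ Icc mstar pibar → f z ∈ Icc mstar pibar := by
        intro z hz
        have hge : mstar ≤ f z := by
          have := hmono ⟨hm0.le, hmpi⟩ ⟨hm0.le.trans hz.1, hz.2⟩ hz.1
          rwa [hfm] at this
        exact ⟨hge, (hmaps z ⟨hm0.le.trans hz.1, hz.2⟩).2⟩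
      have hmem : ∀ k, f^[k] x ∈ Icc mstar pibar := by
        intro k
        induction k with
        | zero => simpa using ⟨hcase.le, hx.2⟩
        | succ n ih => rw [Function.iterate_succ_apply']; exact hinv _ ih
      have hanti : Antitone fun k => f^[k] x := by
        refine antitone_nat_of_succ_le fun k => ?_
        rw [Function.iterate_succ_apply']
        exact hle _ (hmem k)
      have hBdd : BddBelow (range fun k => f^[k] x) := by
        refine ⟨mstar, ?_⟩; rintro _ ⟨k, rfl⟩; exact (hmem k).1
      have hT := tendsto_atTop_ciInf hanti hBdd
      set L := ⨅ k, f^[k] x with hLdef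
      have hLm : mstar ≤ L := le_ciInf fun k => (hmem k).1
      have hLpi : L ≤ pibar := by
        have := ciInf_le hBdd 0
        simp only [Function.iterate_zero_apply] at this
        exact this.trans hx.2
      have hfL := hfix x L (fun k => ⟨hm0.le.trans (hmem k).1, (hmem k).2⟩)
        ⟨(hm0.trans_le hLm).le, hLpi⟩ hT
      have : L = mstar := huniq L (hm0.trans_le hLm) hLpi hfL
      rwa [this] at hT
  · intro hd1 x hx
    have hle : ∀ z, z ∈ Icc 0 pibar → f z ≤ z := by
      intro z hz
      rcases eq_or_lt_of_le hz.1 with h | h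
      · rw [← h, hf0]
      · have := hstrict z h hz.2; nlinarith
    have hmem : ∀ k, f^[k] x ∈ Icc 0 pibar := by
      intro k
      induction k with
      | zero => simpa using hx
      | succ n ih => rw [Function.iterate_succ_apply']; exact hmaps _ ih
    have hanti : Antitone fun k => f^[k] x := by
      refine antitone_nat_of_succ_le fun k => ?_
      rw [Function.iterate_succ_apply']
      exact hle _ (hmem k)
    have hBdd : BddBelow (range fun k => f^[k] x) := by
      refine ⟨0, ?_⟩; rintro _ ⟨k, rfl⟩; exact (hmem k).1
    have hT := tendsto_atTop_ciInf hanti hBdd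
    set L := ⨅ k, f^[k] x with hLdef
    have hL0 : 0 ≤ L := le_ciInf fun k => (hmem k).1
    have hLpi : L ≤ pibar := by
      have := ciInf_le hBdd 0
      simp only [Function.iterate_zero_apply] at this
      exact this.trans hx.2
    have hfL := hfix x L hmem ⟨hL0, hLpi⟩ hT
    have hL : L = 0 := by
      rcases eq_or_lt_of_le hL0 with h | h
      · exact h.symm
      · have := hstrict L h hLpi; nlinarith
    rwa [hL] at hT
end

section
/- Consider the continuous-time Markov chain (I(t)) on {0,1,…,n} with jump rates: from state x, up by 1 at rate λ_L·x·(1 − x/n) and down by 1 at rate γ·x (so 0 is absorbing). Let ψ(n,x) satisfy ψ(n,n)=1 and ψ(n,x) = 1 + (λ_L/γ)(1 − x/n)ψ(n,x+1) for 1 ≤ x ≤ n−1, and define φ by φ(n,0)=0 and φ(n,x) = φ(n,x−1) − ψ(n,x)/γ. Then the generator L of the chain applied to φ(n,·) satisfies (Lφ)(x) = x for all 0 ≤ x ≤ n. -/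
/-! Since the backward differences of `φ` are `-ψ/γ`, the death term of `Lφ(x)` is `x ψ(x)` and the
birth term is `-x (λ_L/γ)(1 - x/n) ψ(x+1)`; the recursion for `ψ` makes their sum `x`. At `x = n`
the birth rate vanishes and `ψ(n) = 1`. -/

lemma drift_eq_of_backward_difference {f g : ℕ → ℝ} {γ : ℝ} (hγ : γ ≠ 0) {x : ℕ}
    (hdiff : ∀ y, x ≤ y → y ≤ x + 1 → f y = f (y - 1) - g y / γ) (b : ℝ) :
    b * (f (x + 1) - f x) + γ * x * (f (x - 1) - f x) = x * g x - b / γ * g (x + 1) := by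
  have hup : f (x + 1) = f x - g (x + 1) / γ := hdiff (x + 1) (by omega) le_rfl
  have hdown : f x = f (x - 1) - g x / γ := hdiff x le_rfl (by omega)
  rw [hup, hdown]
  field_simp
  ring

theorem stmt_10_general (n : ℕ) (lamL gam : ℝ) (hg : 0 < gam)
    (ψ φ : ℕ → ℕ → ℝ)
    (hψn : ψ n n = 1)
    (hψ : ∀ x : ℕ, 1 ≤ x → x ≤ n - 1 →
      ψ n x = 1 + (lamL / gam) * (1 - (x : ℝ) / n) * ψ n (x + 1))
    (hφ : ∀ x : ℕ, 1 ≤ x → x ≤ n → φ n x = φ n (x - 1) - ψ n x / gam) :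
    ∀ x : ℕ, x ≤ n →
      lamL * x * (1 - (x : ℝ) / n) * (φ n (x + 1) - φ n x) +
        gam * x * (φ n (x - 1) - φ n x) = (x : ℝ) := by
  intro x hx
  rcases Nat.eq_zero_or_pos x with rfl | hx1
  · simp
  rcases hx.eq_or_lt with rfl | hxn
  · have hbirth : (1 - (x : ℝ) / x) = 0 := by
      rw [div_self (by positivity), sub_self]
    simp only [hbirth, hφ x hx1 le_rfl, hψn, mul_zero, zero_mul, zero_add]
    field_simp
    ring
  · rw [drift_eq_of_backward_difference hg.ne' (fun y hy hy' => hφ y (by omega) (by omega)),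
      hψ x hx1 (by omega)]
    field_simp
    ring

theorem stmt_10 (n : ℕ) (hn : 1 ≤ n) (lamL gam : ℝ) (hL : 0 < lamL) (hg : 0 < gam)
    (ψ φ : ℕ → ℕ → ℝ)
    (hψn : ψ n n = 1)
    (hψ : ∀ x : ℕ, 1 ≤ x → x ≤ n - 1 →
      ψ n x = 1 + (lamL / gam) * (1 - (x : ℝ) / n) * ψ n (x + 1))
    (hφ0 : φ n 0 = 0)
    (hφ : ∀ x : ℕ, 1 ≤ x → x ≤ n → φ n x = φ n (x - 1) - ψ n x / gam) :
    ∀ x : ℕ, x ≤ n →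
      lamL * x * (1 - (x : ℝ) / n) * (φ n (x + 1) - φ n x) +
        gam * x * (φ n (x - 1) - φ n x) = (x : ℝ) :=
  stmt_10_general n lamL gam hg ψ φ hψn hψ hφ
end

section
/- Define R₀(n) = (λ_G/γ)·(1 + Σ_{ℓ=1}^{n−1} (λ_L/γ)^ℓ ∏_{j=1}^{ℓ}(1 − j/n)) for n ≥ 1 and λ_L, λ_G, γ > 0. If λ_L ≥ γ, then R₀(n) → ∞ as n → ∞. -/
/-! Each fixed product `∏_{j ≤ ℓ} (1 - j/n)` tends to `1` and is nonnegative for `ℓ ≤ n`, so for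
every `k` the first `k` terms of the sum eventually exceed any `b < k`: the partial sums are unbounded.
Since `λ_L/γ ≥ 1`, the weights `(λ_L/γ)^ℓ` only increase the terms. -/

open Finset Filter Topology

lemma prod_one_sub_div_nonneg {ℓ n : ℕ} (h : ℓ ≤ n) :
    0 ≤ ∏ j ∈ Icc 1 ℓ, (1 - (j : ℝ) / n) :=
  prod_nonneg fun j hj =>
    sub_nonneg.2 <| div_le_one_of_le₀ (by exact_mod_cast (mem_Icc.1 hj).2.trans h) n.cast_nonneg

lemma tendsto_prod_one_sub_div_natCast (s : Finset ℕ) :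
    Tendsto (fun n : ℕ => ∏ j ∈ s, (1 - (j : ℝ) / n)) atTop (𝓝 1) := by
  simpa using tendsto_finsetProd s fun j _ =>
    (tendsto_const_div_atTop_nhds_zero_nat (j : ℝ)).const_sub 1

lemma tendsto_sum_Icc_atTop_of_tendsto_one {f : ℕ → ℕ → ℝ} {N : ℕ → ℕ}
    (hf0 : ∀ n, ∀ ℓ ∈ Icc 1 (N n), 0 ≤ f n ℓ) (hf1 : ∀ ℓ, Tendsto (f · ℓ) atTop (𝓝 1))
    (hN : Tendsto N atTop atTop) :
    Tendsto (fun n => ∑ ℓ ∈ Icc 1 (N n), f n ℓ) atTop atTop := by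
  rw [tendsto_atTop]
  intro b
  obtain ⟨k, hk⟩ := exists_nat_gt b
  have hlim : Tendsto (fun n => ∑ ℓ ∈ Icc 1 k, f n ℓ) atTop (𝓝 k) := by
    simpa using tendsto_finsetSum (Icc 1 k) fun ℓ _ => hf1 ℓ
  filter_upwards [hlim.eventually (eventually_gt_nhds hk), hN.eventually_ge_atTop k] with n hb hkN
  calc b ≤ ∑ ℓ ∈ Icc 1 k, f n ℓ := hb.le
    _ ≤ ∑ ℓ ∈ Icc 1 (N n), f n ℓ :=
      sum_le_sum_of_subset_of_nonneg (Icc_subset_Icc_right hkN) fun ℓ hℓ _ => hf0 n ℓ hℓ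

theorem stmt_12_general (lamL lamG gam : ℝ) (hG : 0 < lamG) (hg : 0 < gam)
    (hge : gam ≤ lamL) :
    Tendsto (fun n : ℕ =>
        (lamG / gam) * (1 + ∑ ℓ ∈ Finset.Icc 1 (n - 1),
          (lamL / gam) ^ ℓ * ∏ j ∈ Finset.Icc 1 ℓ, (1 - (j : ℝ) / n)))
      atTop atTop := by
  have hr : 1 ≤ lamL / gam := (one_le_div hg).2 hge
  have hnonneg : ∀ n : ℕ, ∀ ℓ ∈ Icc 1 (n - 1), 0 ≤ ∏ j ∈ Icc 1 ℓ, (1 - (j : ℝ) / n) :=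
    fun n ℓ hℓ => prod_one_sub_div_nonneg ((mem_Icc.1 hℓ).2.trans (n.sub_le 1))
  have hunweighted := tendsto_sum_Icc_atTop_of_tendsto_one hnonneg
    (fun ℓ => tendsto_prod_one_sub_div_natCast (Icc 1 ℓ)) (tendsto_sub_atTop_nat 1)
  refine (tendsto_atTop_add_const_left _ 1 ?_).const_mul_atTop (div_pos hG hg)
  exact tendsto_atTop_mono (fun n => sum_le_sum fun ℓ hℓ =>
    le_mul_of_one_le_left (hnonneg n ℓ hℓ) (one_le_pow₀ hr)) hunweighted

theorem stmt_12 (lamL lamG gam : ℝ) (hL : 0 < lamL) (hG : 0 < lamG) (hg : 0 < gam)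
    (hge : gam ≤ lamL) :
    Tendsto (fun n : ℕ =>
        (lamG / gam) * (1 + ∑ ℓ ∈ Finset.Icc 1 (n - 1),
          (lamL / gam) ^ ℓ * ∏ j ∈ Finset.Icc 1 ℓ, (1 - (j : ℝ) / n)))
      atTop atTop :=
  stmt_12_general lamL lamG gam hG hg hge
end

section
/- Fix n ≥ 1 and λ_L, λ_G, γ, π̄ > 0. For m ∈ [0,π̄], let μ_m be the unique probability distribution on {0,…,n} satisfying γ(ℓ+1)μ_m(ℓ+1) = (1 − ℓ/n)(λ_L ℓ + λ_G(n/π̄)m)·μ_m(ℓ) for 0 ≤ ℓ ≤ n−1. Then the mean M(m) = Σ_{ℓ=0}^n ℓ·μ_m(ℓ) is a continuous and non-decreasing function of m on [0,π̄], with M(0) = 0 and M(m) ≤ n. -/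
/-!
Detailed balance solves the recurrence: `μ_m(ℓ) = μ_m(0) ∏_{j<ℓ} r_j(m)` with
`r_j(m) = (1 - j/n)(λ_L j + λ_G (n/π̄) m) / (γ (j+1))`, so `μ_m(ℓ)` is a continuous function of `m`
divided by its (nonvanishing) total mass. Each ratio `r_j(m)` is nonnegative and non-decreasing in
`m`, hence `μ_{m₁}` and `μ_{m₂}` are in likelihood-ratio order for `m₁ ≤ m₂`, and Holley's
inequality on the chain `{0, …, n}` compares their means. At `m = 0` the factor `r_0(0)` vanishes,
so `μ_0` is the point mass at `0`.
-/

open Finset Set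

lemma prod_range_mul_prod_range_le {r s : ℕ → ℝ} {k ℓ : ℕ} (hkℓ : k ≤ ℓ)
    (hr : ∀ j < ℓ, 0 ≤ r j) (hrs : ∀ j < ℓ, r j ≤ s j) :
    (∏ j ∈ range ℓ, r j) * ∏ j ∈ range k, s j ≤ (∏ j ∈ range ℓ, s j) * ∏ j ∈ range k, r j := by
  have hsplit (t : ℕ → ℝ) : ∏ j ∈ range ℓ, t j = (∏ j ∈ range k, t j) * ∏ j ∈ Ico k ℓ, t j := by
    rw [range_eq_Ico, range_eq_Ico, prod_Ico_consecutive _ k.zero_le hkℓ]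
  have hs (j : ℕ) (hj : j < ℓ) : 0 ≤ s j := (hr j hj).trans (hrs j hj)
  have htail : ∏ j ∈ Ico k ℓ, r j ≤ ∏ j ∈ Ico k ℓ, s j :=
    prod_le_prod (fun j hj ↦ hr j (mem_Ico.1 hj).2) fun j hj ↦ hrs j (mem_Ico.1 hj).2
  have hhead : 0 ≤ (∏ j ∈ range k, r j) * ∏ j ∈ range k, s j :=
    mul_nonneg (prod_nonneg fun j hj ↦ hr j (by simp at hj; omega))
      (prod_nonneg fun j hj ↦ hs j (by simp at hj; omega))
  rw [hsplit r, hsplit s]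
  linear_combination mul_le_mul_of_nonneg_left htail hhead

lemma eq_mul_prod_range_of_mul_succ_eq {μ b d : ℕ → ℝ} {n : ℕ}
    (h : ∀ ℓ < n, d ℓ * μ (ℓ + 1) = b ℓ * μ ℓ) (hd : ∀ ℓ < n, d ℓ ≠ 0) :
    ∀ ℓ ≤ n, μ ℓ = μ 0 * ∏ j ∈ range ℓ, b j / d j := by
  intro ℓ hℓ
  induction ℓ with
  | zero => simp
  | succ ℓ ih =>
    have hstep : μ (ℓ + 1) = b ℓ / d ℓ * μ ℓ := by
      rw [div_mul_eq_mul_div, eq_div_iff (hd ℓ hℓ), mul_comm, h ℓ hℓ]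
    rw [hstep, ih (by omega), prod_range_succ]
    ring

/-- Holley's inequality on the chain `{0, …, n}`. -/
lemma sum_range_mul_le_of_mul_le_mul {p q f : ℕ → ℝ} {n : ℕ}
    (hp : ∀ ℓ ≤ n, 0 ≤ p ℓ) (hq : ∀ ℓ ≤ n, 0 ≤ q ℓ) (hf₀ : 0 ≤ f) (hf : Monotone f)
    (hpq : ∑ ℓ ∈ range (n + 1), p ℓ = ∑ ℓ ∈ range (n + 1), q ℓ)
    (hratio : ∀ k ℓ, k ≤ ℓ → ℓ ≤ n → p ℓ * q k ≤ p k * q ℓ) :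
    ∑ ℓ ∈ range (n + 1), f ℓ * p ℓ ≤ ∑ ℓ ∈ range (n + 1), f ℓ * q ℓ := by
  simp only [← Fin.sum_univ_eq_sum_range] at hpq ⊢
  refine holley (α := Fin (n + 1)) (μ := fun i ↦ f i) (f := fun i ↦ p i) (g := fun i ↦ q i)
    (fun i ↦ hf₀ _) (fun i ↦ hp i (by omega)) (fun i ↦ hq i (by omega))
    (fun i j hij ↦ hf (by simpa using hij)) hpq fun a b ↦ ?_
  rcases le_total a b with hab | hba
  · simp [inf_eq_left.2 hab, sup_eq_right.2 hab]
  · simpa [inf_eq_right.2 hba, sup_eq_left.2 hba] using hratio b a hba (by omega)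

lemma sum_range_natCast_mul_le {p : ℕ → ℝ} {n : ℕ} (hp : ∀ ℓ ≤ n, 0 ≤ p ℓ)
    (hsum : ∑ ℓ ∈ range (n + 1), p ℓ = 1) :
    ∑ ℓ ∈ range (n + 1), (ℓ : ℝ) * p ℓ ≤ n :=
  calc ∑ ℓ ∈ range (n + 1), (ℓ : ℝ) * p ℓ ≤ ∑ ℓ ∈ range (n + 1), (n : ℝ) * p ℓ :=
        sum_le_sum fun ℓ hℓ ↦ mul_le_mul_of_nonneg_right
          (by exact_mod_cast Nat.lt_succ_iff.1 (mem_range.1 hℓ))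
          (hp ℓ (Nat.lt_succ_iff.1 (mem_range.1 hℓ)))
    _ = n := by rw [← mul_sum, hsum, mul_one]

section ProportionalToWeights

variable {X : Type*} {s : Set X} {μ W : X → ℕ → ℝ} {n : ℕ}

lemma mul_sum_eq_one_of_eq_mul {p w : ℕ → ℝ} (hw : ∀ ℓ ≤ n, p ℓ = p 0 * w ℓ)
    (hsum : ∑ ℓ ∈ range (n + 1), p ℓ = 1) :
    p 0 * ∑ ℓ ∈ range (n + 1), w ℓ = 1 := by
  rw [mul_sum, ← hsum]
  exact sum_congr rfl fun ℓ hℓ ↦ (hw ℓ (by simp at hℓ; omega)).symm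

lemma continuousOn_sum_mul_of_eq_mul [TopologicalSpace X] (f : ℕ → ℝ)
    (hW : ∀ x ∈ s, ∀ ℓ ≤ n, μ x ℓ = μ x 0 * W x ℓ)
    (hsum : ∀ x ∈ s, ∑ ℓ ∈ range (n + 1), μ x ℓ = 1) (hc : ∀ ℓ, Continuous fun x ↦ W x ℓ) :
    ContinuousOn (fun x ↦ ∑ ℓ ∈ range (n + 1), f ℓ * μ x ℓ) s := by
  have hnorm (x : X) (hx : x ∈ s) := mul_sum_eq_one_of_eq_mul (hW x hx) (hsum x hx)
  refine ContinuousOn.congr (f := fun x ↦ ∑ ℓ ∈ range (n + 1),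
    f ℓ * ((∑ k ∈ range (n + 1), W x k)⁻¹ * W x ℓ)) ?_ fun x hx ↦ ?_
  · exact continuousOn_finsetSum _ fun ℓ _ ↦ continuousOn_const.mul <|
      (ContinuousOn.inv₀ (by fun_prop) fun x hx ↦ right_ne_zero_of_mul_eq_one (hnorm x hx)).mul
        (hc ℓ).continuousOn
  · refine sum_congr rfl fun ℓ hℓ ↦ ?_
    rw [hW x hx ℓ (by simp at hℓ; omega), eq_inv_of_mul_eq_one_left (hnorm x hx)]

lemma monotoneOn_sum_mul_of_eq_mul [Preorder X] {f : ℕ → ℝ} (hf₀ : 0 ≤ f) (hf : Monotone f)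
    (hW : ∀ x ∈ s, ∀ ℓ ≤ n, μ x ℓ = μ x 0 * W x ℓ)
    (hμ : ∀ x ∈ s, ∀ ℓ ≤ n, 0 ≤ μ x ℓ) (hsum : ∀ x ∈ s, ∑ ℓ ∈ range (n + 1), μ x ℓ = 1)
    (hratio : ∀ x ∈ s, ∀ y ∈ s, x ≤ y → ∀ k ℓ, k ≤ ℓ → ℓ ≤ n →
      W x ℓ * W y k ≤ W y ℓ * W x k) :
    MonotoneOn (fun x ↦ ∑ ℓ ∈ range (n + 1), f ℓ * μ x ℓ) s := by
  intro x hx y hy hxy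
  refine sum_range_mul_le_of_mul_le_mul (hμ x hx) (hμ y hy) hf₀ hf
    (by rw [hsum x hx, hsum y hy]) fun k ℓ hkℓ hℓ ↦ ?_
  have h₀ : 0 ≤ μ x 0 * μ y 0 := mul_nonneg (hμ x hx 0 n.zero_le) (hμ y hy 0 n.zero_le)
  rw [hW x hx ℓ hℓ, hW y hy k (by omega), hW x hx k (by omega), hW y hy ℓ hℓ]
  linear_combination (μ x 0 * μ y 0) * hratio x hx y hy hxy k ℓ hkℓ hℓ

end ProportionalToWeights

section ForcedSIS

variable (n : ℕ) (lamL a gam : ℝ)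

noncomputable def sisRate (m : ℝ) (j : ℕ) : ℝ :=
  (1 - (j : ℝ) / n) * (lamL * j + a * m) / (gam * (j + 1))

noncomputable def sisWeight (m : ℝ) (ℓ : ℕ) : ℝ :=
  ∏ j ∈ range ℓ, sisRate n lamL a gam m j

variable {n lamL a gam}

lemma one_sub_div_nonneg {j : ℕ} (hj : j < n) : 0 ≤ 1 - (j : ℝ) / n :=
  sub_nonneg.2 (div_le_one_of_le₀ (by exact_mod_cast hj.le) n.cast_nonneg)

lemma sisRate_nonneg (hL : 0 ≤ lamL) (ha : 0 ≤ a) (hg : 0 ≤ gam) {m : ℝ} (hm : 0 ≤ m) {j : ℕ}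
    (hj : j < n) : 0 ≤ sisRate n lamL a gam m j := by
  have := one_sub_div_nonneg hj
  unfold sisRate
  positivity

lemma sisRate_le_sisRate (ha : 0 ≤ a) (hg : 0 ≤ gam) {m₁ m₂ : ℝ} (h : m₁ ≤ m₂) {j : ℕ}
    (hj : j < n) : sisRate n lamL a gam m₁ j ≤ sisRate n lamL a gam m₂ j := by
  have := one_sub_div_nonneg hj
  unfold sisRate
  gcongr

lemma sisWeight_mul_sisWeight_le (hL : 0 ≤ lamL) (ha : 0 ≤ a) (hg : 0 ≤ gam) {m₁ m₂ : ℝ}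
    (hm₁ : 0 ≤ m₁) (h : m₁ ≤ m₂) {k ℓ : ℕ} (hkℓ : k ≤ ℓ) (hℓ : ℓ ≤ n) :
    sisWeight n lamL a gam m₁ ℓ * sisWeight n lamL a gam m₂ k ≤
      sisWeight n lamL a gam m₂ ℓ * sisWeight n lamL a gam m₁ k :=
  prod_range_mul_prod_range_le hkℓ (fun j hj ↦ sisRate_nonneg hL ha hg hm₁ (by omega))
    fun j hj ↦ sisRate_le_sisRate ha hg h (by omega)

lemma continuous_sisWeight (ℓ : ℕ) : Continuous fun m ↦ sisWeight n lamL a gam m ℓ := by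
  unfold sisWeight sisRate
  fun_prop

lemma sisWeight_zero_of_pos {ℓ : ℕ} (hℓ : 0 < ℓ) : sisWeight n lamL a gam 0 ℓ = 0 :=
  prod_eq_zero (mem_range.2 hℓ) (by simp [sisRate])

end ForcedSIS

theorem stmt_17_general (n : ℕ) (lamL lamG gam pibar : ℝ)
    (hL : 0 < lamL) (hG : 0 < lamG) (hg : 0 < gam) (hpi : 0 < pibar)
    (μ : ℝ → ℕ → ℝ)
    (hrec : ∀ m ∈ Icc (0:ℝ) pibar, ∀ ℓ : ℕ, ℓ ≤ n - 1 →
      gam * (ℓ + 1 : ℝ) * μ m (ℓ + 1) =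
        (1 - (ℓ : ℝ) / n) * (lamL * ℓ + lamG * ((n : ℝ) / pibar) * m) * μ m ℓ)
    (hprob : ∀ m ∈ Icc (0:ℝ) pibar, (∀ ℓ ≤ n, 0 ≤ μ m ℓ) ∧
      ∑ ℓ ∈ Finset.range (n + 1), μ m ℓ = 1)
    (M : ℝ → ℝ)
    (hM : ∀ m, M m = ∑ ℓ ∈ Finset.range (n + 1), (ℓ : ℝ) * μ m ℓ) :
    ContinuousOn M (Icc 0 pibar) ∧ MonotoneOn M (Icc 0 pibar) ∧
      M 0 = 0 ∧ ∀ m ∈ Icc (0:ℝ) pibar, M m ≤ n := by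
  obtain rfl : M = fun m ↦ ∑ ℓ ∈ range (n + 1), (ℓ : ℝ) * μ m ℓ := funext hM
  set a := lamG * ((n : ℝ) / pibar)
  have ha : 0 ≤ a := by positivity
  have hW (m : ℝ) (hm : m ∈ Icc 0 pibar) (ℓ : ℕ) (hℓ : ℓ ≤ n) :
      μ m ℓ = μ m 0 * sisWeight n lamL a gam m ℓ :=
    eq_mul_prod_range_of_mul_succ_eq (fun j hj ↦ hrec m hm j (by omega))
      (fun j _ ↦ by positivity) ℓ hℓ
  refine ⟨continuousOn_sum_mul_of_eq_mul _ hW (fun m hm ↦ (hprob m hm).2) continuous_sisWeight,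
    monotoneOn_sum_mul_of_eq_mul (fun ℓ ↦ ℓ.cast_nonneg) Nat.mono_cast hW
      (fun m hm ↦ (hprob m hm).1) (fun m hm ↦ (hprob m hm).2) fun m₁ hm₁ _ _ h _ _ ↦
        sisWeight_mul_sisWeight_le hL.le ha hg.le hm₁.1 h, ?_,
    fun m hm ↦ sum_range_natCast_mul_le (hprob m hm).1 (hprob m hm).2⟩
  refine sum_eq_zero fun ℓ hℓ ↦ ?_
  rcases ℓ.eq_zero_or_pos with rfl | hℓ₀
  · simp
  · rw [hW 0 ⟨le_rfl, hpi.le⟩ ℓ (by simp at hℓ; omega), sisWeight_zero_of_pos hℓ₀]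
    simp

theorem stmt_17 (n : ℕ) (hn : 1 ≤ n) (lamL lamG gam pibar : ℝ)
    (hL : 0 < lamL) (hG : 0 < lamG) (hg : 0 < gam) (hpi : 0 < pibar)
    (μ : ℝ → ℕ → ℝ)
    (hrec : ∀ m ∈ Icc (0:ℝ) pibar, ∀ ℓ : ℕ, ℓ ≤ n - 1 →
      gam * (ℓ + 1 : ℝ) * μ m (ℓ + 1) =
        (1 - (ℓ : ℝ) / n) * (lamL * ℓ + lamG * ((n : ℝ) / pibar) * m) * μ m ℓ)
    (hprob : ∀ m ∈ Icc (0:ℝ) pibar, (∀ ℓ ≤ n, 0 ≤ μ m ℓ) ∧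
      ∑ ℓ ∈ Finset.range (n + 1), μ m ℓ = 1)
    (M : ℝ → ℝ)
    (hM : ∀ m, M m = ∑ ℓ ∈ Finset.range (n + 1), (ℓ : ℝ) * μ m ℓ) :
    ContinuousOn M (Icc 0 pibar) ∧ MonotoneOn M (Icc 0 pibar) ∧
      M 0 = 0 ∧ ∀ m ∈ Icc (0:ℝ) pibar, M m ≤ n :=
  stmt_17_general n lamL lamG gam pibar hL hG hg hpi μ hrec hprob M hM
end
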